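/- The sequence N ↦ H(N,1/2) = (1/(N·2^N)) Σ_{k=0}^{N} C(N,k) log₂ C(N,k) is monotonically nondecreasing in N: for every integer N ≥ 1, H(N+1,1/2) ≥ H(N,1/2). -/

import Mathlib

/-!
Write `S n = ∑ₖ C(n,k) log C(n,k)`, so that `H(n,1/2) = S n / (n 2ⁿ log 2)`. Pascal's rule and the
symmetry `k ↦ n - k` give `S (n+1) = 2 (S n + V n)` with `V n = ∑ₖ C(n,k) log ((n+1)/(k+1))`,
which reduces monotonicity to `S n ≤ n V n`. Jensen's inequality for `log` with weights `C(n,k)`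
gives `S n ≤ 2ⁿ log (C(2n,n)/2ⁿ)` (as `∑ₖ C(n,k)² = C(2n,n)`) and `V n ≥ 2ⁿ log (2(n+1)/(n+2))`
(as the mean of `k+1` is `(n+2)/2`), and an induction on `n` shows `C(2n,n)/2ⁿ ≤ (2(n+1)/(n+2))ⁿ`.
-/

open Finset

/-- `H(N,1/2) = (1/(N·2^N)) ∑_{k=0}^{N} C(N,k) log₂ C(N,k)`. -/
noncomputable def Hhalf (N : ℕ) : ℝ :=
  (1 / ((N : ℝ) * 2 ^ N)) * ∑ k ∈ Finset.range (N + 1),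
    (N.choose k : ℝ) * Real.logb 2 (N.choose k)

open Real

lemma pow_mul_add_le_add_one_pow_mul (a n : ℕ) : a ^ n * (a + n) ≤ (a + 1) ^ n * a := by
  induction n with
  | zero => simp
  | succ n ih =>
    calc a ^ (n + 1) * (a + (n + 1)) = a * (a ^ n * (a + n)) + a ^ n * a := by ring
      _ ≤ a * ((a + 1) ^ n * a) + (a + 1) ^ n * a := by gcongr; omega
      _ = (a + 1) ^ (n + 1) * a := by ring

lemma Nat.centralBinom_mul_pow_le (n : ℕ) :
    n.centralBinom * (n + 2) ^ n ≤ 4 ^ n * (n + 1) ^ n := by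
  induction n with
  | zero => simp
  | succ n ih =>
    set a := (n + 1) * (n + 3) with ha
    -- As `a + 1 = (n + 2) ^ 2`, this bounds the ratio of consecutive terms of the sequence;
    -- it reduces to Bernoulli's inequality for `(1 + 1/a) ^ n`.
    have hratio : 2 * (2 * n + 1) * (n + 3) * a ^ n ≤ 4 * (n + 1) * (n + 2) * (a + 1) ^ n := by
      refine Nat.le_of_mul_le_mul_right ?_ (by positivity : 0 < a)
      calc 2 * (2 * n + 1) * (n + 3) * a ^ n * a
          = a ^ n * (2 * (2 * n + 1) * (n + 3) * a) := by ring
        _ ≤ a ^ n * (4 * (n + 1) * (n + 2) * (a + n)) := by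
          refine Nat.mul_le_mul_left _ ?_
          rw [ha]; nlinarith [Nat.zero_le (n ^ 3), Nat.zero_le (n ^ 2)]
        _ = 4 * (n + 1) * (n + 2) * (a ^ n * (a + n)) := by ring
        _ ≤ 4 * (n + 1) * (n + 2) * ((a + 1) ^ n * a) :=
          Nat.mul_le_mul_left _ (pow_mul_add_le_add_one_pow_mul a n)
        _ = 4 * (n + 1) * (n + 2) * (a + 1) ^ n * a := by ring
    refine Nat.le_of_mul_le_mul_left (c := (n + 1) * (n + 2) ^ n) ?_ (by positivity)
    calc (n + 1) * (n + 2) ^ n * ((n + 1).centralBinom * (n + 1 + 2) ^ (n + 1))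
        = (n + 1) * (n + 1).centralBinom * (n + 3) ^ (n + 1) * (n + 2) ^ n := by ring
      _ = 2 * (2 * n + 1) * (n + 3) * (n + 3) ^ n * (n.centralBinom * (n + 2) ^ n) := by
        rw [Nat.succ_mul_centralBinom_succ]; ring
      _ ≤ 2 * (2 * n + 1) * (n + 3) * (n + 3) ^ n * (4 ^ n * (n + 1) ^ n) := by gcongr
      _ = 4 ^ n * (2 * (2 * n + 1) * (n + 3) * a ^ n) := by rw [ha, mul_pow]; ring
      _ ≤ 4 ^ n * (4 * (n + 1) * (n + 2) * (a + 1) ^ n) := by gcongr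
      _ = (n + 1) * (n + 2) ^ n * (4 ^ (n + 1) * (n + 1 + 1) ^ (n + 1)) := by
        rw [show a + 1 = (n + 2) ^ 2 by ring, ← pow_mul]; ring

lemma centralBinom_div_two_pow_le (n : ℕ) :
    (n.centralBinom : ℝ) / 2 ^ n ≤ (2 * (n + 1) / (n + 2)) ^ n := by
  rw [div_pow, div_le_div_iff₀ (by positivity) (by positivity)]
  have h := (Nat.cast_le (α := ℝ)).2 (Nat.centralBinom_mul_pow_le n)
  push_cast at h
  calc _ ≤ (4 : ℝ) ^ n * (n + 1) ^ n := h
    _ = _ := by rw [show (4 : ℝ) = 2 * 2 by norm_num, mul_pow, mul_pow]; ring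

lemma sum_mul_log_le_mul_log_div_sum {ι : Type*} (s : Finset ι) (w x : ι → ℝ)
    (hw : ∀ i ∈ s, 0 ≤ w i) (hx : ∀ i ∈ s, 0 < x i) (hW : 0 < ∑ i ∈ s, w i) :
    ∑ i ∈ s, w i * log (x i) ≤
      (∑ i ∈ s, w i) * log ((∑ i ∈ s, w i * x i) / ∑ i ∈ s, w i) := by
  have h := strictConcaveOn_log_Ioi.concaveOn.le_map_centerMass hw hW hx
  simp only [centerMass, smul_eq_mul, Function.comp_apply, inv_mul_eq_div] at h
  rwa [div_le_iff₀' hW] at h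

lemma Finset.sum_range_choose_mul_sub {R : Type*} [Semiring R] (n : ℕ) (f : ℕ → R) :
    ∑ k ∈ range (n + 1), (n.choose k : R) * f (n - k) =
      ∑ k ∈ range (n + 1), (n.choose k : R) * f k := by
  rw [← sum_range_reflect]
  refine sum_congr rfl fun k hk => ?_
  have hk : k ≤ n := mem_range_succ_iff.mp hk
  rw [add_tsub_cancel_right, Nat.sub_sub_self hk, Nat.choose_symm hk]

lemma Finset.sum_range_choose_cast {R : Type*} [Semiring R] (n : ℕ) :
    ∑ k ∈ range (n + 1), (n.choose k : R) = 2 ^ n := by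
  rw [← Nat.cast_sum, Nat.sum_range_choose, Nat.cast_pow, Nat.cast_ofNat]

noncomputable def binomLogSum (n : ℕ) : ℝ :=
  ∑ k ∈ range (n + 1), (n.choose k : ℝ) * log (n.choose k)

lemma Hhalf_eq_binomLogSum (n : ℕ) : Hhalf n = binomLogSum n / (n * 2 ^ n * log 2) := by
  simp only [Hhalf, binomLogSum, logb, ← mul_div_assoc, ← sum_div]
  ring

lemma log_choose_succ_succ {n k : ℕ} (hk : k ≤ n) :
    log ((n + 1).choose (k + 1)) = log (n.choose k) + log ((n + 1) / (k + 1)) := by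
  have h : ((n + 1).choose (k + 1) : ℝ) = n.choose k * ((n + 1) / (k + 1)) := by
    rw [mul_div_assoc', eq_div_iff (by positivity), mul_comm (n.choose k : ℝ)]
    exact_mod_cast (Nat.add_one_mul_choose_eq n k).symm
  rw [h, log_mul (by exact_mod_cast (Nat.choose_pos hk).ne') (by positivity)]

lemma binomLogSum_succ (n : ℕ) :
    binomLogSum (n + 1) = 2 * (binomLogSum n +
      ∑ k ∈ range (n + 1), (n.choose k : ℝ) * log ((n + 1) / (k + 1))) := by
  have hpascal := sum_choose_succ_mul (R := ℝ) (fun k _ => log ((n + 1).choose k)) n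
  have hreflect := sum_range_choose_mul_sub (R := ℝ) n (fun j => log ((n + 1).choose (j + 1)))
  have hsymm : ∀ k ∈ range (n + 1), (n.choose k : ℝ) * log ((n + 1).choose (n - k + 1))
      = n.choose k * log ((n + 1).choose k) := fun k hk => by
    have hk : k ≤ n := mem_range_succ_iff.mp hk
    rw [show n - k + 1 = n + 1 - k by omega, Nat.choose_symm (by omega)]
  rw [sum_congr rfl hsymm] at hreflect
  rw [binomLogSum, hpascal, hreflect, ← two_mul, binomLogSum, ← sum_add_distrib]
  congr 1
  refine sum_congr rfl fun k hk => ?_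
  rw [log_choose_succ_succ (mem_range_succ_iff.mp hk), mul_add]

lemma sum_range_choose_mul_add_one (n : ℕ) :
    ∑ k ∈ range (n + 1), (n.choose k : ℝ) * (k + 1) = 2 ^ n * (n + 2) / 2 := by
  have hsum := sum_range_choose_cast (R := ℝ) n
  have hpair : ∀ k ∈ range (n + 1), (n.choose k : ℝ) * (((n - k : ℕ) : ℝ) + 1)
      + n.choose k * (k + 1) = n.choose k * (n + 2) := fun k hk => by
    rw [Nat.cast_sub (mem_range_succ_iff.mp hk)]; ring
  have h := sum_congr rfl hpair
  rw [sum_add_distrib, sum_range_choose_mul_sub n (fun j => (j : ℝ) + 1), ← sum_mul, hsum] at h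
  linarith

lemma pow_mul_log_le_sum_choose_mul_log (n : ℕ) :
    2 ^ n * log (2 * (n + 1) / (n + 2)) ≤
      ∑ k ∈ range (n + 1), (n.choose k : ℝ) * log ((n + 1) / (k + 1)) := by
  have hsum := sum_range_choose_cast (R := ℝ) n
  have hmean : (∑ k ∈ range (n + 1), (n.choose k : ℝ) * (k + 1)) / 2 ^ n = (n + 2) / 2 := by
    rw [sum_range_choose_mul_add_one]; field_simp
  have hjensen := sum_mul_log_le_mul_log_div_sum (range (n + 1)) (fun k => (n.choose k : ℝ))
    (fun k => (k : ℝ) + 1) (fun k _ => by positivity) (fun k _ => by positivity)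
    (by rw [hsum]; positivity)
  simp only [hsum, hmean] at hjensen
  have hlog : ∀ k ∈ range (n + 1), (n.choose k : ℝ) * log ((n + 1) / (k + 1))
      = n.choose k * log (n + 1) - n.choose k * log (k + 1) := fun k _ => by
    rw [log_div (by positivity) (by positivity), mul_sub]
  rw [sum_congr rfl hlog, sum_sub_distrib, ← sum_mul, hsum,
    show (2 * (n + 1) / (n + 2) : ℝ) = (n + 1) / ((n + 2) / 2) by field_simp,
    log_div (by positivity) (by positivity)]
  linarith

lemma binomLogSum_le (n : ℕ) : binomLogSum n ≤ 2 ^ n * log (n.centralBinom / 2 ^ n) := by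
  have hsum := sum_range_choose_cast (R := ℝ) n
  have hsq : ∑ k ∈ range (n + 1), (n.choose k : ℝ) * n.choose k = n.centralBinom := by
    rw [Nat.centralBinom_eq_two_mul_choose, ← Nat.sum_range_choose_sq]; push_cast; simp only [sq]
  have hjensen := sum_mul_log_le_mul_log_div_sum (range (n + 1)) (fun k => (n.choose k : ℝ))
    (fun k => (n.choose k : ℝ)) (fun k _ => by positivity)
    (fun k hk => by exact_mod_cast Nat.choose_pos (mem_range_succ_iff.mp hk))
    (by rw [hsum]; positivity)
  rwa [hsum, hsq] at hjensen

lemma binomLogSum_le_mul_sum (n : ℕ) :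
    binomLogSum n ≤
      n * ∑ k ∈ range (n + 1), (n.choose k : ℝ) * log ((n + 1) / (k + 1)) := by
  have hbound : log (n.centralBinom / 2 ^ n) ≤ n * log (2 * (n + 1) / (n + 2)) := by
    rw [← log_pow]
    exact log_le_log (by have := n.centralBinom_pos; positivity) (centralBinom_div_two_pow_le n)
  calc binomLogSum n ≤ 2 ^ n * log (n.centralBinom / 2 ^ n) := binomLogSum_le n
    _ ≤ n * (2 ^ n * log (2 * (n + 1) / (n + 2))) := by
      rw [mul_left_comm]; gcongr
    _ ≤ _ := by gcongr; exact pow_mul_log_le_sum_choose_mul_log n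

/-- The sequence `N ↦ H(N,1/2)` is monotonically nondecreasing:
for every integer `N ≥ 1`, `H(N+1,1/2) ≥ H(N,1/2)`. -/
theorem Hhalf_mono (N : ℕ) (hN : 1 ≤ N) : Hhalf N ≤ Hhalf (N + 1) := by
  have hN' : (0 : ℝ) < N := by exact_mod_cast hN
  rw [Hhalf_eq_binomLogSum, Hhalf_eq_binomLogSum, binomLogSum_succ,
    div_le_div_iff₀ (by positivity) (by positivity)]
  push_cast
  linear_combination (2 * 2 ^ N * log 2) * binomLogSum_le_mul_sum N
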